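/- Let S be a monoid with zero, λ ≥ 1 a cardinal, and let h : B⁰_λ(S) → T be a surjective non-trivial semigroup homomorphism. Then T is isomorphic to the Brandt λ⁰-extension of the monoid (S_{α,α})h, the homomorphic image of the copy S_{α,α} = {(α,s,α) : s ∈ S∖{0_S}} ∪ {0} of S, for any α ∈ I_λ. -/

import Mathlib

attribute [local instance] Classical.propDecidable

/-- The Brandt `λ⁰`-extension of a semigroup `S` with zero, with index set `I`:
its elements are `0` (encoded `none`) and triples `(α, s, β)` with `s ≠ 0`. -/
def Brandt (I S : Type*) [Zero S] : Type _ := Option (I × {s : S // s ≠ 0} × I)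

instance brandtZero {I S : Type*} [Zero S] : Zero (Brandt I S) := ⟨none⟩

/-- Multiplication on the Brandt `λ⁰`-extension. -/
noncomputable def brandtMul {I S : Type*} [Zero S] [Mul S] :
    Brandt I S → Brandt I S → Brandt I S
  | some (α, a, β), some (γ, b, δ) =>
      if h : β = γ ∧ a.1 * b.1 ≠ 0 then some (α, ⟨a.1 * b.1, h.2⟩, δ) else none
  | _, _ => none

noncomputable instance brandtMulInst {I S : Type*} [Zero S] [Mul S] :
    Mul (Brandt I S) := ⟨brandtMul⟩

/-- The semigroup of `I × I`-matrix units. -/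
def MatrixUnits (I : Type*) := Option (I × I)

instance muZero {I : Type*} : Zero (MatrixUnits I) := ⟨none⟩

noncomputable instance muMul {I : Type*} : Mul (MatrixUnits I) :=
  ⟨fun x y => match x, y with
    | some (a, b), some (c, d) => if b = c then some (a, d) else none
    | _, _ => none⟩

/-- The subset of `Brandt I S` induced by a subset `T ⊆ S`
(the Brandt extension of `T` inside that of `S`). -/
def brandtSet {I S : Type*} [Zero S] (T : Set S) : Set (Brandt I S) :=
  {z | z = 0 ∨ ∃ (α β : I) (s : {s : S // s ≠ 0}), s.1 ∈ T ∧ z = some (α, s, β)}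

/-- The map `B⁰_{λ₁}(S) → B⁰_{λ₂}(T)` induced by `h : S → T`, an index map `φ`
and families `u`, `v` (`v` playing the role of `a ↦ u(a)⁻¹`):
`(α,s,β) ↦ (φ α, u α · h s · v β, φ β)` when the middle entry is nonzero, else `0`. -/
noncomputable def brandtHomMap {I₁ I₂ S T : Type*} [Zero S] [Zero T] [Mul T]
    (φ : I₁ → I₂) (u v : I₁ → T) (h : S → T) : Brandt I₁ S → Brandt I₂ T
  | some (a, s, b) =>
      if hh : u a * h s.1 * v b ≠ 0 then
        some (φ a, ⟨u a * h s.1 * v b, hh⟩, φ b) else none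
  | none => none

/-- The canonical copy of `S` in `Brandt I S` at index `α` (the set `S_{α,α}`). -/
noncomputable def brandtIncl {I S : Type*} [Zero S] (α : I) : S → Brandt I S :=
  fun s => if h : s = 0 then 0 else some (α, ⟨s, h⟩, α)

/-- The non-zero element `(α, s, β)` of `Brandt I S`. -/
def brandtElt {I S : Type*} [Zero S] (α : I) (s : {s : S // s ≠ 0}) (β : I) :
    Brandt I S := some (α, s, β)

/-! Conjugating by the matrix units `(γ, 1, α)` and `(α, 1, δ)` moves `(α, s, α)` to `(γ, s, δ)`,
so `h (γ, s, δ)` is determined by `γ`, `δ` and `g s := h (α, s, α)`; conversely, multiplying by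
`(γ, 1, γ)` on the left and `(δ, 1, δ)` on the right shows that a value `h (γ, s, δ) ≠ h 0`
determines `γ` and `δ`. Hence `h` and the surjective homomorphism `(γ, s, δ) ↦ (γ, g s, δ)` onto
`B⁰_λ(M)`, `M = g(S)`, identify the same pairs of elements, and `T ≅ B⁰_λ(M)`. -/
theorem MulHom.exists_mulEquiv_of_ker_eq {X Y Z : Type*} [Mul X] [Mul Y] [Mul Z]
    (f : X →ₙ* Y) (g : X →ₙ* Z) (hf : Function.Surjective f) (hg : Function.Surjective g)
    (hker : ∀ x y, g x = g y ↔ f x = f y) : ∃ e : Y ≃* Z, ∀ x, e (f x) = g x := by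
  let e₀ : Y → Z := fun y => g (Function.surjInv hf y)
  have he₀ (x : X) : e₀ (f x) = g x := (hker _ _).2 (Function.surjInv_eq hf (f x))
  have hinj : Function.Injective e₀ := by
    intro y y' hyy'
    obtain ⟨x, rfl⟩ := hf y
    obtain ⟨x', rfl⟩ := hf y'
    rwa [he₀, he₀, hker] at hyy'
  have hsurj : Function.Surjective e₀ := fun z => by
    obtain ⟨x, rfl⟩ := hg z
    exact ⟨f x, he₀ x⟩
  have hmul (y y' : Y) : e₀ (y * y') = e₀ y * e₀ y' := by
    obtain ⟨x, rfl⟩ := hf y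
    obtain ⟨x', rfl⟩ := hf y'
    rw [← map_mul, he₀, he₀, he₀, map_mul]
  exact ⟨MulEquiv.ofBijective (⟨e₀, hmul⟩ : Y →ₙ* Z) ⟨hinj, hsurj⟩, he₀⟩

namespace Brandt

variable {I S M : Type*}

section Zero

variable [Zero S]

@[elab_as_elim]
protected theorem cases_on' {P : Brandt I S → Prop} (x : Brandt I S) (zero : P 0)
    (elt : ∀ γ s δ, P (brandtElt γ s δ)) : P x := by
  rcases x with _ | ⟨γ, s, δ⟩
  exacts [zero, elt γ s δ]

/-- The element `(γ, a, δ)`, read as `0` when `a = 0`; `mk γ 1 δ` is a matrix unit. -/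
noncomputable def mk (γ : I) (a : S) (δ : I) : Brandt I S :=
  if ha : a ≠ 0 then brandtElt γ ⟨a, ha⟩ δ else 0

@[simp] theorem mk_zero (γ δ : I) : mk γ (0 : S) δ = 0 := dif_neg (not_not.2 rfl)

theorem mk_of_ne_zero {γ δ : I} {a : S} (ha : a ≠ 0) : mk γ a δ = brandtElt γ ⟨a, ha⟩ δ :=
  dif_pos ha

theorem mk_val (γ : I) (s : {s : S // s ≠ 0}) (δ : I) : mk γ s.1 δ = brandtElt γ s δ :=
  mk_of_ne_zero s.2

theorem mk_eq_zero_iff {γ δ : I} {a : S} : mk γ a δ = 0 ↔ a = 0 := by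
  by_cases ha : a = 0
  · simp [ha]
  · simp only [mk_of_ne_zero ha, ha, iff_false]
    exact Option.some_ne_none _

theorem mk_eq_mk_iff {γ δ γ' δ' : I} {a b : S} (ha : a ≠ 0) :
    mk γ a δ = mk γ' b δ' ↔ γ = γ' ∧ a = b ∧ δ = δ' := by
  refine ⟨fun h => ?_, fun ⟨hγ, hab, hδ⟩ => hγ ▸ hab ▸ hδ ▸ rfl⟩
  have hb : b ≠ 0 := fun hb => ha (mk_eq_zero_iff.1 (by rw [h, hb, mk_zero]))
  rw [mk_of_ne_zero ha, mk_of_ne_zero hb] at h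
  simpa only [Prod.mk.injEq, Subtype.mk.injEq] using Option.some.inj h

theorem brandtIncl_eq_mk (α : I) (a : S) : brandtIncl α a = mk α a α := by
  by_cases ha : a = 0
  · simp [brandtIncl, ha]
  · rw [mk_of_ne_zero ha]; exact dif_neg ha

noncomputable def map [Zero M] (g : S → M) : Brandt I S → Brandt I M
  | some (γ, s, δ) => mk γ (g s.1) δ
  | none => 0

theorem map_mk [Zero M] {g : S → M} (hg : g 0 = 0) (γ : I) (a : S) (δ : I) :
    map g (mk γ a δ) = mk γ (g a) δ := by
  by_cases ha : a = 0
  · simp only [ha, mk_zero, hg]; rfl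
  · rw [mk_of_ne_zero ha]; rfl

theorem map_surjective [Zero M] {g : S → M} (hg : Function.Surjective g) (hg0 : g 0 = 0) :
    Function.Surjective (map g : Brandt I S → Brandt I M) := by
  rintro (_ | ⟨γ, m, δ⟩)
  · exact ⟨0, rfl⟩
  · obtain ⟨s, hs⟩ := hg m.1
    exact ⟨mk γ s δ, by rw [map_mk hg0, hs, mk_val]; rfl⟩

end Zero

section MulZeroClass

variable [MulZeroClass S]

noncomputable instance : MulZeroClass (Brandt I S) where
  zero_mul _ := rfl
  mul_zero x := by cases x <;> rfl

theorem mk_mul_mk (γ δ γ' δ' : I) (a b : S) :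
    mk γ a δ * mk γ' b δ' = if δ = γ' then mk γ (a * b) δ' else 0 := by
  by_cases ha : a = 0
  · simp [ha]
  by_cases hb : b = 0
  · simp [hb]
  rw [mk_of_ne_zero ha, mk_of_ne_zero hb]
  by_cases hδ : δ = γ'
  · by_cases hab : a * b = 0
    · simp only [hδ, if_true, hab, mk_zero]
      exact dif_neg fun h => h.2 hab
    · rw [if_pos hδ, mk_of_ne_zero hab]
      exact dif_pos ⟨hδ, hab⟩
  · rw [if_neg hδ]
    exact dif_neg fun h => hδ h.1

theorem brandtElt_mul_brandtElt (γ δ γ' δ' : I) (s t : {s : S // s ≠ 0}) :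
    brandtElt γ s δ * brandtElt γ' t δ' = if δ = γ' then mk γ (s.1 * t.1) δ' else 0 := by
  rw [← mk_val, ← mk_val, mk_mul_mk]

noncomputable def inclMulHom (α : I) : S →ₙ* Brandt I S where
  toFun := brandtIncl α
  map_mul' a b := by simp only [brandtIncl_eq_mk, mk_mul_mk, if_true]

variable [MulZeroClass M]

noncomputable def mapMulHom (g : S →ₙ* M) (hg : g 0 = 0) : Brandt I S →ₙ* Brandt I M where
  toFun := map g
  map_mul' x y := by
    match x, y with
    | none, _ => exact (zero_mul _).symm
    | some _, none => exact (mul_zero _).symm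
    | some (γ, s, δ), some (γ', t, δ') =>
      change map g (brandtElt γ s δ * brandtElt γ' t δ') =
        map g (brandtElt γ s δ) * map g (brandtElt γ' t δ')
      rw [brandtElt_mul_brandtElt, ← mk_val γ s, ← mk_val γ' t, map_mk hg, map_mk hg, mk_mul_mk]
      split_ifs
      · rw [map_mk hg, map_mul]
      · rfl

end MulZeroClass

section MonoidWithZero

variable {T : Type*} [MonoidWithZero S]

theorem mk_one_mul_mk (γ δ δ' : I) (a : S) : mk γ 1 δ * mk δ a δ' = mk γ a δ' := by
  rw [mk_mul_mk, if_pos rfl, one_mul]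

theorem mk_mul_mk_one (γ δ δ' : I) (a : S) : mk γ a δ * mk δ 1 δ' = mk γ a δ' := by
  rw [mk_mul_mk, if_pos rfl, mul_one]

theorem mk_one_mul_mk_mul_mk_one (γ' γ δ δ' : I) (a : S) :
    mk γ' 1 γ * mk γ a δ * mk δ 1 δ' = mk γ' a δ' := by
  rw [mk_one_mul_mk, mk_mul_mk_one]

variable [Mul T] (f : Brandt I S →ₙ* T)

theorem map_mk_eq_map_mk_of_eq {γ δ : I} (γ' δ' : I) {a b : S}
    (H : f (mk γ a δ) = f (mk γ b δ)) : f (mk γ' a δ') = f (mk γ' b δ') := by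
  rw [← mk_one_mul_mk_mul_mk_one γ' γ δ δ' a, ← mk_one_mul_mk_mul_mk_one γ' γ δ δ' b,
    map_mul, map_mul, H, map_mul, map_mul]

theorem map_mk_eq_map_mk_iff (γ δ γ' δ' : I) (a b : S) :
    f (mk γ a δ) = f (mk γ b δ) ↔ f (mk γ' a δ') = f (mk γ' b δ') :=
  ⟨map_mk_eq_map_mk_of_eq f γ' δ', map_mk_eq_map_mk_of_eq f γ δ⟩

theorem eq_of_map_mk_eq_map_mk {γ δ γ' δ' : I} {a b : S}
    (H : f (mk γ a δ) = f (mk γ' b δ')) (h0 : f (mk γ a δ) ≠ f 0) : γ = γ' ∧ δ = δ' := by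
  constructor <;> by_contra hne <;> apply h0
  · calc f (mk γ a δ) = f (mk γ 1 γ) * f (mk γ' b δ') := by rw [← H, ← map_mul, mk_one_mul_mk]
      _ = f 0 := by rw [← map_mul, mk_mul_mk, if_neg hne]
  · calc f (mk γ a δ) = f (mk γ' b δ') * f (mk δ 1 δ) := by rw [← H, ← map_mul, mk_mul_mk_one]
      _ = f 0 := by rw [← map_mul, mk_mul_mk, if_neg (Ne.symm hne)]

variable [Zero M] (α : I) {g : S → M}
  (hg : ∀ a b, g a = g b ↔ f (brandtIncl α a) = f (brandtIncl α b)) (hg0 : g 0 = 0)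
include hg hg0

theorem map_eq_zero_iff (x : Brandt I S) : map g x = 0 ↔ f x = f 0 := by
  induction x using Brandt.cases_on' with
  | zero => exact iff_of_true rfl rfl
  | elt γ s δ =>
  rw [← mk_val, map_mk hg0, mk_eq_zero_iff, ← hg0, hg, brandtIncl_eq_mk, brandtIncl_eq_mk,
    ← mk_zero γ δ, map_mk_eq_map_mk_iff f α α γ δ]

theorem map_eq_map_iff (x y : Brandt I S) : map g x = map g y ↔ f x = f y := by
  have hzero := map_eq_zero_iff f α hg hg0
  constructor
  · intro H
    by_cases hx : map g x = 0
    · rw [(hzero x).1 hx, (hzero y).1 (H ▸ hx)]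
    induction x using Brandt.cases_on' with
    | zero => exact absurd rfl hx
    | elt γ s δ =>
    induction y using Brandt.cases_on' with
    | zero => exact absurd H hx
    | elt γ' t δ' =>
    simp only [← mk_val, map_mk hg0] at hx H ⊢
    obtain ⟨rfl, hst, rfl⟩ := (mk_eq_mk_iff (mt mk_eq_zero_iff.2 hx)).1 H
    rw [← map_mk_eq_map_mk_iff f α α, ← brandtIncl_eq_mk, ← brandtIncl_eq_mk, ← hg]
    exact hst
  · intro H
    by_cases hx : f x = f 0
    · rw [(hzero x).2 hx, (hzero y).2 (H ▸ hx)]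
    induction x using Brandt.cases_on' with
    | zero => exact absurd rfl hx
    | elt γ s δ =>
    induction y using Brandt.cases_on' with
    | zero => exact absurd H hx
    | elt γ' t δ' =>
    simp only [← mk_val] at H hx ⊢
    obtain ⟨rfl, rfl⟩ := eq_of_map_mk_eq_map_mk f H hx
    rw [map_mk hg0, map_mk hg0, (hg _ _).2]
    rwa [brandtIncl_eq_mk, brandtIncl_eq_mk, map_mk_eq_map_mk_iff f α α γ δ]

end MonoidWithZero

end Brandt

theorem brandt_image.{u, v, w} {I : Type u} {S : Type v} {T : Type w}
    [MonoidWithZero S] [Mul T] [Nonempty I]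
    (h : Brandt I S → T) (hmul : ∀ x y, h (x * y) = h x * h y)
    (hsurj : Function.Surjective h) (hnt : ∃ x y, h x ≠ h y) (α : I) :
    ∃ (M : Type w) (_ : Zero M) (_ : Mul M) (g : S → M) (e : T ≃ Brandt I M),
      Function.Surjective g ∧
      (∀ s t : S, g (s * t) = g s * g t) ∧
      g 0 = 0 ∧
      (∀ x y : T, e (x * y) = e x * e y) ∧
      (∀ s : {s : S // s ≠ 0},
        e (h (brandtElt α s α)) =
          if hg : g s.1 ≠ 0 then brandtElt α ⟨g s.1, hg⟩ α else 0) := by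
  let f : Brandt I S →ₙ* T := ⟨h, hmul⟩
  let k : S →ₙ* T := f.comp (Brandt.inclMulHom α)
  let g : S →ₙ* k.srange := k.srangeRestrict
  let : Zero k.srange := ⟨g 0⟩
  let : MulZeroClass k.srange := k.srangeRestrict_surjective.mulZeroClass g rfl (map_mul g)
  have hker (a b : S) : g a = g b ↔ f (brandtIncl α a) = f (brandtIncl α b) := Subtype.ext_iff
  obtain ⟨e, he⟩ := MulHom.exists_mulEquiv_of_ker_eq f (Brandt.mapMulHom g rfl) hsurj
    (Brandt.map_surjective k.srangeRestrict_surjective rfl)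
    (Brandt.map_eq_map_iff f α hker rfl)
  exact ⟨k.srange, inferInstance, inferInstance, g, e.toEquiv, k.srangeRestrict_surjective,
    map_mul g, rfl, map_mul e, fun s => he _⟩
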